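/- Let n ≥ 3, let w > 0, and let D ∈ M_n(ℝ) be the symmetric matrix with zero diagonal, D_{12} = D_{21} = 0, and D_{ij} = 1/w for all other pairs i ≠ j (the complete graph with all weights equal to w except that the edge {1,2} is removed). Then the noncommutative distance satisfies d^D(1,2) = w·sqrt(2/(n−2)). -/

import Mathlib

open scoped ENNReal

/-- The operator norm on square matrices induced by the Euclidean (ℓ²) norm. -/
noncomputable def opNorm {ι : Type*} [Finite ι] (M : Matrix ι ι ℂ) : ℝ :=
  letI := Fintype.ofFinite ι
  letI := Classical.decEq ι
  ‖Matrix.toEuclideanCLM (𝕜 := ℂ) M‖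

/-- The commutator `[D, π(a)]` of a matrix with the diagonal matrix of `a`. -/
noncomputable def commD {ι : Type*} [Finite ι] (D : Matrix ι ι ℂ) (a : ι → ℂ) : Matrix ι ι ℂ :=
  letI := Fintype.ofFinite ι
  letI := Classical.decEq ι
  D * Matrix.diagonal a - Matrix.diagonal a * D

/-- Connes' noncommutative distance associated to the Dirac operator `D`. -/
noncomputable def ncDist {ι : Type*} [Finite ι] (D : Matrix ι ι ℂ) (i j : ι) : ℝ≥0∞ :=
  ⨆ (a : ι → ℂ) (_ : opNorm (commD D a) ≤ 1), ENNReal.ofReal ‖a i - a j‖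

/-- The weight of an edge: the inverse of `|D i j|` (infinite if `D i j = 0`). -/
noncomputable def eWeight {ι : Type*} (D : Matrix ι ι ℂ) (u v : ι) : ℝ≥0∞ :=
  (ENNReal.ofReal ‖D u v‖)⁻¹

/-- Adjacency in the graph `G_D`. -/
def Adjac {ι : Type*} (D : Matrix ι ι ℂ) (u v : ι) : Prop := u ≠ v ∧ D u v ≠ 0

/-- The length of a walk `i :: p` computed with weights `eWeight D`. -/
noncomputable def walkLength {ι : Type*} (D : Matrix ι ι ℂ) : ι → List ι → ℝ≥0∞
  | _, [] => 0
  | u, v :: rest => eWeight D u v + walkLength D v rest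

/-- `i :: p` is a walk from `i` to `j` in the graph `G_D`. -/
def IsWalk {ι : Type*} (D : Matrix ι ι ℂ) (i j : ι) (p : List ι) : Prop :=
  List.Chain (Adjac D) i p ∧ (i :: p).getLast (List.cons_ne_nil _ _) = j

/-- `i` and `j` lie in the same connected component of `G_D`. -/
def Conn {ι : Type*} (D : Matrix ι ι ℂ) (i j : ι) : Prop := ∃ p, IsWalk D i j p

/-- The geodesic (weighted shortest-path) distance on `G_D`. -/
noncomputable def gDist {ι : Type*} (D : Matrix ι ι ℂ) (i j : ι) : ℝ≥0∞ :=
  ⨅ (p : List ι) (_ : IsWalk D i j p), walkLength D i p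



/-! Write `e = δ_q - δ_p` (`edgeVec`) and `t` for the indicator of the `n - 2` vertices off the
removed edge `{p, q}` (`offEdgeIndicator`); then `‖e‖ = √2`, `‖t‖ = √(n - 2)` and `⟪e, t⟫ = 0`.

Every vertex of `t` is joined to both `p` and `q` with weight `w`, so
`⟪e, [D, π(a)] t⟫ = (n - 2) w⁻¹ (a p - a q)`, and Cauchy–Schwarz bounds this by
`√2 ‖[D, π(a)]‖ √(n - 2)`: this is the upper bound.

For `a = c e` the commutator is `-(c / w) (e t* - t e*)`, and for orthogonal `e, t` this operator
has norm at most `‖e‖ ‖t‖` by Bessel's inequality for `e / ‖e‖, t / ‖t‖`; hence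
`c = w / √(2 (n - 2))` is admissible and attains the bound. -/

open InnerProductSpace

section OrthogonalPair

variable {𝕜 E : Type*} [RCLike 𝕜] [NormedAddCommGroup E] [InnerProductSpace 𝕜 E]

local notation "⟪" x ", " y "⟫" => inner 𝕜 x y

theorem sq_norm_mul_sq_norm_inner_add_le_of_inner_eq_zero {x y : E} (hxy : ⟪x, y⟫ = 0) (z : E) :
    ‖y‖ ^ 2 * ‖⟪x, z⟫‖ ^ 2 + ‖x‖ ^ 2 * ‖⟪y, z⟫‖ ^ 2 ≤ ‖x‖ ^ 2 * ‖y‖ ^ 2 * ‖z‖ ^ 2 := by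
  rcases eq_or_ne x 0 with rfl | hx
  · simp
  rcases eq_or_ne y 0 with rfl | hy
  · simp
  have hon : Orthonormal 𝕜 ![(‖x‖⁻¹ : 𝕜) • x, (‖y‖⁻¹ : 𝕜) • y] := by
    rw [orthonormal_iff_ite]
    intro i j
    fin_cases i <;> fin_cases j <;>
      simp [inner_smul_left, inner_smul_right, hxy, inner_eq_zero_symm.mp hxy,
        norm_smul_inv_norm, hx, hy]
  have hbessel := hon.sum_inner_products_le z (s := Finset.univ)
  simp only [Fin.sum_univ_two, Matrix.cons_val_zero, Matrix.cons_val_one, inner_smul_left,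
    norm_mul, RCLike.norm_conj, norm_inv, RCLike.norm_ofReal, abs_norm] at hbessel
  have hx' : ‖x‖ ≠ 0 := norm_ne_zero_iff.mpr hx
  have hy' : ‖y‖ ≠ 0 := norm_ne_zero_iff.mpr hy
  calc ‖y‖ ^ 2 * ‖⟪x, z⟫‖ ^ 2 + ‖x‖ ^ 2 * ‖⟪y, z⟫‖ ^ 2
      = ‖x‖ ^ 2 * ‖y‖ ^ 2 * ((‖x‖⁻¹ * ‖⟪x, z⟫‖) ^ 2 + (‖y‖⁻¹ * ‖⟪y, z⟫‖) ^ 2) := by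
        field_simp
    _ ≤ ‖x‖ ^ 2 * ‖y‖ ^ 2 * ‖z‖ ^ 2 := by gcongr

theorem norm_rankOne_sub_rankOne_le_of_inner_eq_zero {x y : E} (hxy : ⟪x, y⟫ = 0) :
    ‖rankOne 𝕜 x y - rankOne 𝕜 y x‖ ≤ ‖x‖ * ‖y‖ := by
  refine ContinuousLinearMap.opNorm_le_bound _ (by positivity) fun z => ?_
  rw [sub_apply, rankOne_apply, rankOne_apply]
  refine le_of_sq_le_sq ?_ (by positivity)
  rw [@norm_sub_sq 𝕜, inner_smul_left, inner_smul_right, hxy]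
  simp only [mul_zero, map_zero, sub_zero, norm_smul]
  linarith [sq_norm_mul_sq_norm_inner_add_le_of_inner_eq_zero hxy z]

end OrthogonalPair

open Matrix

theorem commD_apply {ι : Type*} [Finite ι] (D : Matrix ι ι ℂ) (a : ι → ℂ) (i j : ι) :
    commD D a i j = D i j * (a j - a i) := by
  let := Fintype.ofFinite ι
  let := Classical.decEq ι
  simp only [commD, Matrix.sub_apply, mul_diagonal, diagonal_mul]
  ring

variable {ι : Type*} [Fintype ι] [DecidableEq ι]

theorem opNorm_eq_norm_toEuclideanCLM (M : Matrix ι ι ℂ) :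
    opNorm M = ‖toEuclideanCLM (𝕜 := ℂ) M‖ := by
  unfold opNorm
  congr!

theorem toEuclideanCLM_vecMulVec_star (x y : EuclideanSpace ℂ ι) :
    toEuclideanCLM (𝕜 := ℂ) (vecMulVec x (star y)) = rankOne ℂ x y := by
  apply ContinuousLinearMap.coe_injective
  rw [coe_toEuclideanCLM_eq_toEuclideanLin, ← symm_toEuclideanLin_rankOne,
    LinearEquiv.apply_symm_apply]

variable {p q : ι}

theorem Finset.sum_univ_eq_add_add_sum_compl_pair {M : Type*} [AddCommMonoid M] (hpq : p ≠ q)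
    (f : ι → M) : ∑ k, f k = f p + f q + ∑ k ∈ {p, q}ᶜ, f k := by
  rw [← Finset.sum_add_sum_compl {p, q} f, Finset.sum_pair hpq]

theorem Finset.cast_card_compl_pair (hpq : p ≠ q) :
    (({p, q}ᶜ : Finset ι).card : ℝ) = Fintype.card ι - 2 := by
  rw [Finset.card_compl, Finset.card_pair hpq, Nat.cast_sub]
  · norm_num
  · simpa [Finset.card_pair hpq] using Finset.card_le_univ ({p, q} : Finset ι)

noncomputable def completeMinusEdgeDirac (w : ℝ) (p q : ι) : Matrix ι ι ℂ :=
  Matrix.of fun i j =>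
    if i = j then 0 else if (i = p ∧ j = q) ∨ (i = q ∧ j = p) then 0 else ((w⁻¹ : ℝ) : ℂ)

noncomputable def edgeVec (p q : ι) : EuclideanSpace ℂ ι :=
  EuclideanSpace.single q 1 - EuclideanSpace.single p 1

def offEdgeIndicator (p q : ι) : EuclideanSpace ℂ ι :=
  WithLp.toLp 2 fun k => if k = p ∨ k = q then 0 else 1

theorem toEuclideanCLM_offEdgeIndicator_apply (M : Matrix ι ι ℂ) (k : ι) :
    toEuclideanCLM (𝕜 := ℂ) M (offEdgeIndicator p q) k = ∑ j ∈ {p, q}ᶜ, M k j := by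
  rw [offEdgeIndicator, toEuclideanCLM_toLp, PiLp.toLp_apply, mulVec, dotProduct,
    ← Finset.sum_add_sum_compl {p, q}, Finset.sum_eq_zero, zero_add]
  · refine Finset.sum_congr rfl fun j hj => ?_
    simp_all
  · intro j hj
    simp_all

theorem norm_edgeVec (hpq : p ≠ q) : ‖edgeVec p q‖ = √2 := by
  rw [EuclideanSpace.norm_eq, Finset.sum_univ_eq_add_add_sum_compl_pair hpq, Finset.sum_eq_zero]
  · norm_num [edgeVec, hpq, hpq.symm]
  · intro k hk
    simp only [Finset.mem_compl, Finset.mem_insert, Finset.mem_singleton, not_or] at hk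
    simp [edgeVec, hk]

theorem norm_offEdgeIndicator (hpq : p ≠ q) :
    ‖offEdgeIndicator p q‖ = √(Fintype.card ι - 2) := by
  rw [EuclideanSpace.norm_eq, Finset.sum_univ_eq_add_add_sum_compl_pair hpq,
    ← Finset.cast_card_compl_pair hpq, Finset.card_eq_sum_ones, Nat.cast_sum]
  congr 1
  have hterm : ∀ k ∈ ({p, q}ᶜ : Finset ι), ‖offEdgeIndicator p q k‖ ^ 2 = ((1 : ℕ) : ℝ) := by
    intro k hk
    simp only [Finset.mem_compl, Finset.mem_insert, Finset.mem_singleton] at hk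
    simp [offEdgeIndicator, hk]
  rw [Finset.sum_congr rfl hterm]
  simp [offEdgeIndicator]

theorem inner_edgeVec_offEdgeIndicator (p q : ι) :
    inner ℂ (edgeVec p q) (offEdgeIndicator p q) = 0 := by
  simp [edgeVec, offEdgeIndicator, EuclideanSpace.inner_single_left]

variable {w : ℝ}

theorem inner_edgeVec_commD_offEdgeIndicator (hpq : p ≠ q) (a : ι → ℂ) :
    inner ℂ (edgeVec p q) (toEuclideanCLM (𝕜 := ℂ) (commD (completeMinusEdgeDirac w p q) a)
      (offEdgeIndicator p q)) = (Fintype.card ι - 2 : ℝ) * w⁻¹ * (a p - a q) := by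
  simp only [edgeVec, inner_sub_left, EuclideanSpace.inner_single_left, map_one, one_mul,
    toEuclideanCLM_offEdgeIndicator_apply]
  rw [← Finset.sum_sub_distrib, Finset.sum_congr rfl (g := fun _ => ((w⁻¹ : ℝ) : ℂ) * (a p - a q)),
    Finset.sum_const, nsmul_eq_mul, ← Finset.cast_card_compl_pair hpq]
  · push_cast
    ring
  · intro j hj
    simp only [Finset.mem_compl, Finset.mem_insert, Finset.mem_singleton, not_or] at hj
    simp only [commD_apply, completeMinusEdgeDirac, of_apply, hj.1, hj.2, Ne.symm hj.1,
      Ne.symm hj.2, and_false, or_self, if_false]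
    ring

theorem commD_completeMinusEdgeDirac_smul_edgeVec (c : ℂ) :
    commD (completeMinusEdgeDirac w p q) (fun k => c * edgeVec p q k) =
      (-c * w⁻¹) • (vecMulVec (edgeVec p q) (star (offEdgeIndicator p q)) -
        vecMulVec (offEdgeIndicator p q) (star (edgeVec p q))) := by
  ext i j
  simp only [commD_apply, completeMinusEdgeDirac, edgeVec, offEdgeIndicator, of_apply,
    Matrix.smul_apply, Matrix.sub_apply, vecMulVec_apply, PiLp.sub_apply, PiLp.single_apply,
    WithLp.ofLp_sub, PiLp.ofLp_single, Pi.star_apply, RCLike.star_def, smul_eq_mul]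
  split_ifs <;> simp_all <;> ring

theorem norm_sub_le_of_opNorm_commD_le_one (hpq : p ≠ q) (hcard : 3 ≤ Fintype.card ι)
    (hw : 0 < w) {a : ι → ℂ} (ha : opNorm (commD (completeMinusEdgeDirac w p q) a) ≤ 1) :
    ‖a p - a q‖ ≤ w * √(2 / (Fintype.card ι - 2)) := by
  set N : ℝ := Fintype.card ι - 2
  have hN : 0 < N := by
    have : (3 : ℝ) ≤ Fintype.card ι := by exact_mod_cast hcard
    linarith
  set T := toEuclideanCLM (𝕜 := ℂ) (commD (completeMinusEdgeDirac w p q) a)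
  have key : N * w⁻¹ * ‖a p - a q‖ ≤ √2 * √N :=
    calc N * w⁻¹ * ‖a p - a q‖ = ‖inner ℂ (edgeVec p q) (T (offEdgeIndicator p q))‖ := by
          rw [inner_edgeVec_commD_offEdgeIndicator hpq, norm_mul, norm_mul, Complex.norm_real,
            Complex.norm_real, Real.norm_of_nonneg hN.le, Real.norm_of_nonneg (by positivity)]
      _ ≤ ‖edgeVec p q‖ * ‖T (offEdgeIndicator p q)‖ := norm_inner_le_norm _ _
      _ ≤ ‖edgeVec p q‖ * (‖T‖ * ‖offEdgeIndicator p q‖) := by gcongr; exact T.le_opNorm _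
      _ ≤ √2 * (1 * √N) := by
          rw [norm_edgeVec hpq, norm_offEdgeIndicator hpq, ← opNorm_eq_norm_toEuclideanCLM]
          gcongr
      _ = √2 * √N := by ring
  have hs : 0 < √N := Real.sqrt_pos.mpr hN
  have key' : √N * (‖a p - a q‖ * √N) ≤ √N * (w * √2) :=
    calc √N * (‖a p - a q‖ * √N) = w * (N * w⁻¹ * ‖a p - a q‖) := by
          rw [mul_comm ‖a p - a q‖, ← mul_assoc, Real.mul_self_sqrt hN.le]
          field_simp
      _ ≤ w * (√2 * √N) := by gcongr
      _ = √N * (w * √2) := by ring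
  rw [Real.sqrt_div' _ hN.le, mul_div_assoc', le_div_iff₀ hs]
  exact le_of_mul_le_mul_left key' hs

theorem exists_opNorm_commD_le_one_norm_sub_eq (hpq : p ≠ q) (hcard : 3 ≤ Fintype.card ι)
    (hw : 0 < w) : ∃ a : ι → ℂ, opNorm (commD (completeMinusEdgeDirac w p q) a) ≤ 1 ∧
      ‖a p - a q‖ = w * √(2 / (Fintype.card ι - 2)) := by
  set N : ℝ := Fintype.card ι - 2
  have hN : 0 < N := by
    have : (3 : ℝ) ≤ Fintype.card ι := by exact_mod_cast hcard
    linarith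
  set c : ℝ := w / (√2 * √N)
  have hc : c * (√2 * √N) = w := div_mul_cancel₀ _ (by positivity)
  refine ⟨fun k => c * edgeVec p q k, ?_, ?_⟩
  · rw [opNorm_eq_norm_toEuclideanCLM, commD_completeMinusEdgeDirac_smul_edgeVec, map_smul,
      map_sub, toEuclideanCLM_vecMulVec_star, toEuclideanCLM_vecMulVec_star, norm_smul]
    calc ‖-(c : ℂ) * w⁻¹‖ * ‖rankOne ℂ (edgeVec p q) (offEdgeIndicator p q) -
          rankOne ℂ (offEdgeIndicator p q) (edgeVec p q)‖
        ≤ c * w⁻¹ * (‖edgeVec p q‖ * ‖offEdgeIndicator p q‖) := by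
          rw [norm_mul, norm_neg, Complex.norm_real, Complex.norm_real,
            Real.norm_of_nonneg (by positivity), Real.norm_of_nonneg (by positivity)]
          gcongr
          exact norm_rankOne_sub_rankOne_le_of_inner_eq_zero (inner_edgeVec_offEdgeIndicator p q)
      _ = 1 := by
          rw [norm_edgeVec hpq, norm_offEdgeIndicator hpq]
          show c * w⁻¹ * (√2 * √N) = 1
          rw [mul_right_comm, hc, mul_inv_cancel₀ hw.ne']
  · simp only [edgeVec, PiLp.sub_apply, PiLp.single_apply, if_neg hpq, if_neg hpq.symm, if_true]
    rw [show (c : ℂ) * (0 - 1) - c * (1 - 0) = -((2 * c : ℝ) : ℂ) by push_cast; ring, norm_neg,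
      Complex.norm_real, Real.norm_of_nonneg (by positivity), Real.sqrt_div' _ hN.le, ← hc]
    field_simp
    rw [Real.sq_sqrt zero_le_two, mul_comm]

theorem ncDist_completeMinusEdgeDirac (hpq : p ≠ q) (hcard : 3 ≤ Fintype.card ι) (hw : 0 < w) :
    ncDist (completeMinusEdgeDirac w p q) p q =
      ENNReal.ofReal (w * √(2 / (Fintype.card ι - 2))) := by
  obtain ⟨a, ha, hap⟩ := exists_opNorm_commD_le_one_norm_sub_eq hpq hcard hw
  refine le_antisymm (iSup₂_le fun b hb => ?_) ?_
  · exact ENNReal.ofReal_le_ofReal (norm_sub_le_of_opNorm_commD_le_one hpq hcard hw hb)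
  · rw [← hap]
    exact le_iSup₂ (f := fun b (_ : opNorm (commD (completeMinusEdgeDirac w p q) b) ≤ 1) =>
      ENNReal.ofReal ‖b p - b q‖) a ha

theorem stmt9 {n : ℕ} (hn : 3 ≤ n) (w : ℝ) (hw : 0 < w)
    (D : Matrix (Fin n) (Fin n) ℂ)
    (hD : D = Matrix.of fun i j =>
      if i = j then 0
      else if (i = (⟨0, by omega⟩ : Fin n) ∧ j = (⟨1, by omega⟩ : Fin n)) ∨
              (i = (⟨1, by omega⟩ : Fin n) ∧ j = (⟨0, by omega⟩ : Fin n)) then 0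
      else (((w⁻¹ : ℝ)) : ℂ)) :
    ncDist D ⟨0, by omega⟩ ⟨1, by omega⟩ =
      ENNReal.ofReal (w * Real.sqrt (2 / ((n : ℝ) - 2))) := by
  have h := ncDist_completeMinusEdgeDirac (w := w) (p := (⟨0, by omega⟩ : Fin n))
    (q := ⟨1, by omega⟩) (by simp) (by rwa [Fintype.card_fin]) hw
  rw [Fintype.card_fin] at h
  rw [hD]
  exact h
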